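/- If the QCQP min{x^T Q_0 x + 2c_0^T x : x ∈ F} has nonempty compact feasible set F ⊆ [0,1]^n, then the dual bound problem (L2) is feasible and its optimal value is a finite lower bound: there exist ℓ ∈ ℝ and certified multipliers such that x^T Q_0 x + 2c_0^T x ≥ ℓ for all x ∈ F, and every ℓ admitting such a certificate satisfies ℓ ≤ min over F of the objective. -/
import Mathlib


open Matrix BigOperators

/-- A certificate for the lower bound `ℓ` in problem (L2): nonnegative
multipliers `λ` for the quadratic constraints, affine multipliers `α` for the
equality constraints, and affine multipliers `β`, `γ` (nonnegative on
`𝒳 = {x ∈ [0,1]ⁿ : Ax = d}`) for the box constraints, making the Lagrangian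
nonnegative on all of `ℝⁿ`. -/
lemma quad_lb (n : ℕ) (Q₀ : Matrix (Fin n) (Fin n) ℝ) (x : Fin n → ℝ) :
    -((∑ i, ∑ j, |Q₀ i j|) * ∑ i, x i ^ 2) ≤ x ⬝ᵥ Q₀.mulVec x := by
  have hS : ∀ i, x i ^ 2 ≤ ∑ k, x k ^ 2 := fun i =>
    Finset.single_le_sum (fun k _ => sq_nonneg (x k)) (Finset.mem_univ i)
  have : x ⬝ᵥ Q₀.mulVec x = ∑ i, ∑ j, x i * (Q₀ i j * x j) := by
    simp [dotProduct, Matrix.mulVec, Finset.mul_sum]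
  rw [this, Finset.sum_mul, neg_eq_neg_one_mul, Finset.mul_sum]
  refine Finset.sum_le_sum fun i _ => ?_
  rw [Finset.sum_mul, neg_eq_neg_one_mul (α := ℝ), Finset.mul_sum]
  refine Finset.sum_le_sum fun j _ => ?_
  have h1 := hS i; have h2 := hS j
  have h3 : -|Q₀ i j| ≤ Q₀ i j := neg_abs_le _
  have h4 : Q₀ i j ≤ |Q₀ i j| := le_abs_self _
  nlinarith [sq_nonneg (x i + x j), sq_nonneg (x i - x j), abs_nonneg (Q₀ i j)]

def CertL2 {n m p : ℕ} (Q : Fin m → Matrix (Fin n) (Fin n) ℝ)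
    (c : Fin m → Fin n → ℝ) (b : Fin m → ℝ)
    (A : Matrix (Fin p) (Fin n) ℝ) (d : Fin p → ℝ)
    (Q₀ : Matrix (Fin n) (Fin n) ℝ) (c₀ : Fin n → ℝ) (ℓ : ℝ) : Prop :=
  ∃ (lam : Fin m → ℝ) (αf : Fin p → Fin n → ℝ) (αc : Fin p → ℝ)
    (βf γf : Fin n → Fin n → ℝ) (βc γc : Fin n → ℝ),
    (∀ i, 0 ≤ lam i) ∧
    (∀ i, ∀ x : Fin n → ℝ, A.mulVec x = d → (∀ j, 0 ≤ x j ∧ x j ≤ 1) →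
      0 ≤ βf i ⬝ᵥ x + βc i) ∧
    (∀ i, ∀ x : Fin n → ℝ, A.mulVec x = d → (∀ j, 0 ≤ x j ∧ x j ≤ 1) →
      0 ≤ γf i ⬝ᵥ x + γc i) ∧
    ∀ x : Fin n → ℝ,
      0 ≤ x ⬝ᵥ Q₀.mulVec x + 2 * (c₀ ⬝ᵥ x) - ℓ
          + ∑ i, lam i * (x ⬝ᵥ (Q i).mulVec x + 2 * (c i ⬝ᵥ x) - b i)
          + ∑ j, (αf j ⬝ᵥ x + αc j) * (A.mulVec x j - d j)
          - ∑ i, (βf i ⬝ᵥ x + βc i) * x i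
          + ∑ i, (γf i ⬝ᵥ x + γc i) * (x i - 1)

theorem stmt_9 (n m p : ℕ) (Q : Fin m → Matrix (Fin n) (Fin n) ℝ)
    (c : Fin m → Fin n → ℝ) (b : Fin m → ℝ)
    (A : Matrix (Fin p) (Fin n) ℝ) (d : Fin p → ℝ)
    (Q₀ : Matrix (Fin n) (Fin n) ℝ) (c₀ : Fin n → ℝ)
    (F : Set (Fin n → ℝ))
    (hF : F = {x | (∀ j, 0 ≤ x j ∧ x j ≤ 1) ∧ A.mulVec x = d ∧
      ∀ i, x ⬝ᵥ (Q i).mulVec x + 2 * (c i ⬝ᵥ x) ≤ b i})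
    (hne : F.Nonempty) :
    -- (a) the bound problem (L2) is feasible
    (∃ ℓ : ℝ, CertL2 Q c b A d Q₀ c₀ ℓ) ∧
    -- (b) every certified ℓ is a lower bound on the objective over F
    ∀ ℓ : ℝ, CertL2 Q c b A d Q₀ c₀ ℓ →
      ∀ x ∈ F, ℓ ≤ x ⬝ᵥ Q₀.mulVec x + 2 * (c₀ ⬝ᵥ x) := by
  constructor
  · -- (a) existence of a certified lower bound
    set K : ℝ := ∑ i, ∑ j, |Q₀ i j| with hK
    have hK0 : 0 ≤ K :=
      Finset.sum_nonneg fun i _ => Finset.sum_nonneg fun j _ => abs_nonneg _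
    set M : ℝ := K + 1 with hM
    refine ⟨-(∑ i, (2 * c₀ i - M) ^ 2 / 4), fun _ => 0, fun _ => 0, fun _ => 0,
      fun _ => 0, fun i j => if j = i then M else 0, fun _ => 0, fun _ => 0,
      fun i => le_refl 0, fun i x _ hx => by simp [dotProduct],
      fun i x _ hx => ?_, fun x => ?_⟩
    · have : (fun j => if j = i then M else 0) ⬝ᵥ x = M * x i := by
        simp [dotProduct, Finset.sum_ite_eq']
      rw [this]
      simp only [add_zero]
      exact mul_nonneg (by linarith) (hx i).1
    · have hdot : ∀ i : Fin n,
          (fun j => if j = i then M else 0) ⬝ᵥ x = M * x i := fun i => by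
        simp [dotProduct, Finset.sum_ite_eq']
      simp only [hdot, Pi.zero_apply, zero_mul, Finset.sum_const_zero,
        zero_dotProduct, zero_add, zero_mul, add_zero, sub_zero, sub_neg_eq_add]
      have h1 := quad_lb n Q₀ x
      have h3 : (0:ℝ) ≤ ∑ i, (x i + (2 * c₀ i - M) / 2) ^ 2 :=
        Finset.sum_nonneg fun i _ => sq_nonneg _
      have split : 2 * (c₀ ⬝ᵥ x) + (∑ i, (2 * c₀ i - M) ^ 2 / 4)
          + (∑ i, M * x i * (x i - 1)) - K * (∑ i, x i ^ 2)
          = ∑ i, (x i + (2 * c₀ i - M) / 2) ^ 2 := by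
        simp only [dotProduct, Finset.mul_sum, ← Finset.sum_add_distrib,
          ← Finset.sum_sub_distrib]
        refine Finset.sum_congr rfl fun i _ => ?_
        rw [hM]; ring
      linarith
  · -- (b) soundness of certificates
    rintro ℓ ⟨lam, αf, αc, βf, γf, βc, γc, hlam, hβ, hγ, hmain⟩ x hx
    rw [hF] at hx
    obtain ⟨hbox, heq, hquad⟩ := hx
    have h0 := hmain x
    have hα : ∑ j, (αf j ⬝ᵥ x + αc j) * (A.mulVec x j - d j) = 0 := by
      apply Finset.sum_eq_zero; intro j _
      rw [heq]; ring
    have hlamsum : ∑ i, lam i * (x ⬝ᵥ (Q i).mulVec x + 2 * (c i ⬝ᵥ x) - b i) ≤ 0 :=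
      Finset.sum_nonpos fun i _ =>
        mul_nonpos_of_nonneg_of_nonpos (hlam i) (by linarith [hquad i])
    have hβsum : 0 ≤ ∑ i, (βf i ⬝ᵥ x + βc i) * x i :=
      Finset.sum_nonneg fun i _ => mul_nonneg (hβ i x heq hbox) (hbox i).1
    have hγsum : ∑ i, (γf i ⬝ᵥ x + γc i) * (x i - 1) ≤ 0 :=
      Finset.sum_nonpos fun i _ =>
        mul_nonpos_of_nonneg_of_nonpos (hγ i x heq hbox) (by linarith [(hbox i).2])
    linarith
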